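/- arXiv:1005.3842 — 2 statements merged into one kernel-verified Lean document; each statement's English description precedes it below -/
import Mathlib

section
/- Given a right principal G-bundle P from H to G and a right principal L-bundle P' from G to L, the quotient P ×_G P' := (P ×_{G⁰} P')/((p,p') ∼ (p·γ, γ⁻¹·p')) is a right principal L-bundle from H to L; composition of generalized morphisms defined this way is associative up to isomorphism of principal bundles. -/
/-- A groupoid `G ⇉ G0` given by source/target maps, a partially defined
(associative) product, a unit map and an inverse map, as in the paper. -/
structure Gpd (G : Type*) (G0 : Type*) where
  s : G → G0
  r : G → G0
  mul : (γ : G) → (η : G) → s γ = r η → G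
  u : G0 → G
  inv : G → G
  s_u : ∀ x, s (u x) = x
  r_u : ∀ x, r (u x) = x
  r_mul : ∀ γ η h, r (mul γ η h) = r γ
  s_mul : ∀ γ η h, s (mul γ η h) = s η
  mul_assoc : ∀ γ η δ (h₁ : s γ = r η) (h₂ : s η = r δ),
    mul γ (mul η δ h₂) (h₁.trans (r_mul η δ h₂).symm) =
      mul (mul γ η h₁) δ ((s_mul γ η h₁).trans h₂)
  mul_u : ∀ γ, mul γ (u (s γ)) (r_u (s γ)).symm = γ
  u_mul : ∀ γ, mul (u (r γ)) γ (s_u (r γ)) = γ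
  inv_comp₁ : ∀ γ, s γ = r (inv γ)
  inv_comp₂ : ∀ γ, s (inv γ) = r γ
  mul_inv : ∀ γ, mul γ (inv γ) (inv_comp₁ γ) = u (r γ)
  inv_mul : ∀ γ, mul (inv γ) γ (inv_comp₂ γ) = u (s γ)

/-- A right groupoid action on a set along an anchor map. -/
structure RightGpdAction {G G0 : Type*} (Γ : Gpd G G0) (X : Type*) where
  ε : X → G0
  act : (x : X) → (γ : G) → ε x = Γ.r γ → X
  ε_act : ∀ x γ h, ε (act x γ h) = Γ.s γ
  act_u : ∀ x, act x (Γ.u (ε x)) (Γ.r_u (ε x)).symm = x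
  act_mul : ∀ x γ₁ γ₂ (h : ε x = Γ.r γ₁) (h' : Γ.s γ₁ = Γ.r γ₂),
    act (act x γ₁ h) γ₂ ((ε_act x γ₁ h).trans h') =
      act x (Γ.mul γ₁ γ₂ h') (h.trans (Γ.r_mul γ₁ γ₂ h').symm)

/-- A left groupoid action on a set along an anchor map. -/
structure LeftGpdAction {G G0 : Type*} (Γ : Gpd G G0) (X : Type*) where
  ρ : X → G0
  act : (γ : G) → (x : X) → Γ.s γ = ρ x → X
  ρ_act : ∀ γ x h, ρ (act γ x h) = Γ.r γ
  act_u : ∀ x, act (Γ.u (ρ x)) x (Γ.s_u (ρ x)) = x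
  act_mul : ∀ γ₁ γ₂ x (h : Γ.s γ₂ = ρ x) (h' : Γ.s γ₁ = Γ.r γ₂),
    act γ₁ (act γ₂ x h) (h'.trans (ρ_act γ₂ x h).symm) =
      act (Γ.mul γ₁ γ₂ h') x ((Γ.s_mul γ₁ γ₂ h').trans h)

/-- A bibundle from `ΓH` to `ΓG` : a set `P` with a left `ΓH`-action and a right
`ΓG`-action which commute and preserve each other's anchor maps. -/
structure Bibundle {H H0 G G0 : Type*} (ΓH : Gpd H H0) (ΓG : Gpd G G0)
    (P : Type*) where
  L : LeftGpdAction ΓH P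
  R : RightGpdAction ΓG P
  ε_Lact : ∀ γ p h, R.ε (L.act γ p h) = R.ε p
  ρ_Ract : ∀ p γ h, L.ρ (R.act p γ h) = L.ρ p
  commute : ∀ γ p η (h₁ : ΓH.s γ = L.ρ p) (h₂ : R.ε p = ΓG.r η),
    L.act γ (R.act p η h₂) (h₁.trans (ρ_Ract p η h₂).symm) =
      R.act (L.act γ p h₁) η ((ε_Lact γ p h₁).trans h₂)

/-- Right principality of a bibundle: the projection `π = L.ρ` is surjective and
`(p,γ) ↦ (p, p·γ)` is a bijection from `P ×_{ε,r} G` onto `P ×_π P`. -/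
def Bibundle.IsPrincipal {H H0 G G0 : Type*} {ΓH : Gpd H H0} {ΓG : Gpd G G0}
    {P : Type*} (B : Bibundle ΓH ΓG P) : Prop :=
  Function.Surjective B.L.ρ ∧
    Function.Bijective (fun z : {z : P × G // B.R.ε z.1 = ΓG.r z.2} =>
      (⟨(z.1.1, B.R.act z.1.1 z.1.2 z.2),
        (B.ρ_Ract z.1.1 z.1.2 z.2).symm⟩ :
          {w : P × P // B.L.ρ w.1 = B.L.ρ w.2}))

/-- The fibered product `P ×_{G⁰} P'` of two composable bibundles. -/
def FP {H H0 G G0 L L0 : Type*} {ΓH : Gpd H H0} {ΓG : Gpd G G0} {ΓL : Gpd L L0}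
    {P P' : Type*} (B : Bibundle ΓH ΓG P) (B' : Bibundle ΓG ΓL P') : Type _ :=
  {x : P × P' // B.R.ε x.1 = B'.L.ρ x.2}

/-- The relation `(p,p') ∼ (p·γ, γ⁻¹·p')` on the fibered product. -/
def BibCompRel {H H0 G G0 L L0 : Type*} {ΓH : Gpd H H0} {ΓG : Gpd G G0}
    {ΓL : Gpd L L0} {P P' : Type*} (B : Bibundle ΓH ΓG P)
    (B' : Bibundle ΓG ΓL P') : FP B B' → FP B B' → Prop :=
  fun a b => ∃ (γ : G) (h : B.R.ε a.1.1 = ΓG.r γ),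
    b.1.1 = B.R.act a.1.1 γ h ∧
      b.1.2 = B'.L.act (ΓG.inv γ) a.1.2
        ((ΓG.inv_comp₂ γ).trans (h.symm.trans a.2))

/-- The carrier `P ×_G P'` of the composition of two generalized morphisms. -/
def CompCarrier {H H0 G G0 L L0 : Type*} {ΓH : Gpd H H0} {ΓG : Gpd G G0}
    {ΓL : Gpd L L0} {P P' : Type*} (B : Bibundle ΓH ΓG P)
    (B' : Bibundle ΓG ΓL P') : Type _ :=
  Quot (BibCompRel B B')

/-- Compatibility of a bibundle structure on `P ×_G P'` with the canonical
anchors and the canonical right and left actions on representatives. -/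
def CompCompatible {H H0 G G0 L L0 : Type*} {ΓH : Gpd H H0} {ΓG : Gpd G G0}
    {ΓL : Gpd L L0} {P P' : Type*} (B : Bibundle ΓH ΓG P)
    (B' : Bibundle ΓG ΓL P') (S : Bibundle ΓH ΓL (CompCarrier B B')) : Prop :=
  (∀ a : FP B B', S.L.ρ (Quot.mk _ a) = B.L.ρ a.1.1) ∧
  (∀ a : FP B B', S.R.ε (Quot.mk _ a) = B'.R.ε a.1.2) ∧
  (∀ (a : FP B B') (γ : L) (h : S.R.ε (Quot.mk _ a) = ΓL.r γ)
      (h' : B'.R.ε a.1.2 = ΓL.r γ),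
    S.R.act (Quot.mk _ a) γ h =
      Quot.mk _ (⟨(a.1.1, B'.R.act a.1.2 γ h'),
        a.2.trans (B'.ρ_Ract a.1.2 γ h').symm⟩ : FP B B')) ∧
  (∀ (a : FP B B') (γ : H) (h : ΓH.s γ = S.L.ρ (Quot.mk _ a))
      (h' : ΓH.s γ = B.L.ρ a.1.1),
    S.L.act γ (Quot.mk _ a) h =
      Quot.mk _ (⟨(B.L.act γ a.1.1 h', a.1.2),
        (B.ε_Lact γ a.1.1 h').trans a.2⟩ : FP B B'))

/-!
The groupoid `G` acts on the fibred product `P ×_{G⁰} P'` by `(p, p')·γ = (p·γ, γ⁻¹·p')`, and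
this action commutes with the left `H`-action on `p` and the right `L`-action on `p'`, so both
descend to the orbit space `P ×_G P'`, where they are computed on representatives.

If `[p, p'·l] = [p, p'·l']`, the element of `G` relating the two representatives fixes `p`, so
it is a unit by freeness of `G` on `P`; hence `p'·l = p'·l'` and `l = l'` by freeness of `L` on
`P'`. If `[p, p']` and `[q, q']` lie over the same point of `H⁰`, write `q = p·γ` and then
`γ·q' = p'·l`; this gives `[p, p']·l = [q, q']`.

Both triple composites are the orbit space of `P ×_{G⁰} P' ×_{L⁰} P''` under `G` and `L`: since
the actions on `P ×_G P'` and `P' ×_L P''` are computed on representatives,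
`[[p, p'], p''] ↦ [p, [p', p'']]` is well defined, with the analogous inverse.
-/

namespace Gpd

variable {G G0 : Type*} (Γ : Gpd G G0)

theorem mul_congr {γ γ' η η' : G} (hγ : γ = γ') (hη : η = η')
    (h : Γ.s γ = Γ.r η) (h' : Γ.s γ' = Γ.r η') :
    Γ.mul γ η h = Γ.mul γ' η' h' := by subst hγ; subst hη; rfl

theorem eq_inv_of_mul_eq_u {γ η : G} (h : Γ.s γ = Γ.r η)
    (hm : Γ.mul γ η h = Γ.u (Γ.r γ)) : η = Γ.inv γ :=
  calc η = Γ.mul (Γ.u (Γ.r η)) η (Γ.s_u _) := (Γ.u_mul η).symm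
    _ = Γ.mul (Γ.mul (Γ.inv γ) γ (Γ.inv_comp₂ γ)) η ((Γ.s_mul _ _ _).trans h) :=
        Γ.mul_congr ((congrArg Γ.u h.symm).trans (Γ.inv_mul γ).symm) rfl _ _
    _ = Γ.mul (Γ.inv γ) (Γ.mul γ η h) ((Γ.inv_comp₂ γ).trans (Γ.r_mul γ η h).symm) :=
        (Γ.mul_assoc (Γ.inv γ) γ η (Γ.inv_comp₂ γ) h).symm
    _ = Γ.mul (Γ.inv γ) (Γ.u (Γ.s (Γ.inv γ))) (Γ.r_u _).symm :=
        Γ.mul_congr rfl (hm.trans (congrArg Γ.u (Γ.inv_comp₂ γ).symm)) _ _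
    _ = Γ.inv γ := Γ.mul_u _

theorem inv_u (x : G0) : Γ.inv (Γ.u x) = Γ.u x := by
  refine (Γ.eq_inv_of_mul_eq_u ((Γ.s_u x).trans (Γ.r_u x).symm) ?_).symm
  have h := Γ.mul_u (Γ.u x)
  simp only [Γ.s_u, Γ.r_u] at h ⊢
  exact h

theorem inv_inv (γ : G) : Γ.inv (Γ.inv γ) = γ := by
  refine (Γ.eq_inv_of_mul_eq_u (Γ.inv_comp₂ γ) ?_).symm
  rw [Γ.inv_mul, Γ.inv_comp₁]

theorem mul_inv_rev {γ η : G} (h : Γ.s γ = Γ.r η) :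
    Γ.inv (Γ.mul γ η h) = Γ.mul (Γ.inv η) (Γ.inv γ)
      ((Γ.inv_comp₂ η).trans (h.symm.trans (Γ.inv_comp₁ γ))) := by
  have hm : Γ.s (Γ.inv η) = Γ.r (Γ.inv γ) :=
    (Γ.inv_comp₂ η).trans (h.symm.trans (Γ.inv_comp₁ γ))
  have h' : Γ.s (Γ.mul γ η h) = Γ.r (Γ.mul (Γ.inv η) (Γ.inv γ) hm) :=
    (Γ.s_mul γ η h).trans ((Γ.inv_comp₁ η).trans (Γ.r_mul _ _ _).symm)
  have hη : Γ.s η = Γ.r (Γ.mul (Γ.inv η) (Γ.inv γ) hm) :=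
    (Γ.inv_comp₁ η).trans (Γ.r_mul _ _ _).symm
  have e1 : Γ.mul η (Γ.mul (Γ.inv η) (Γ.inv γ) hm) hη = Γ.inv γ :=
    calc Γ.mul η (Γ.mul (Γ.inv η) (Γ.inv γ) hm) hη
        = Γ.mul (Γ.mul η (Γ.inv η) (Γ.inv_comp₁ η)) (Γ.inv γ)
            ((Γ.s_mul _ _ _).trans hm) :=
          Γ.mul_assoc η (Γ.inv η) (Γ.inv γ) (Γ.inv_comp₁ η) hm
      _ = Γ.mul (Γ.u (Γ.r (Γ.inv γ))) (Γ.inv γ) (Γ.s_u _) :=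
          Γ.mul_congr ((Γ.mul_inv η).trans
            (congrArg Γ.u (h.symm.trans (Γ.inv_comp₁ γ)))) rfl _ _
      _ = Γ.inv γ := Γ.u_mul _
  refine (Γ.eq_inv_of_mul_eq_u h' ?_).symm
  calc Γ.mul (Γ.mul γ η h) (Γ.mul (Γ.inv η) (Γ.inv γ) hm) h'
      = Γ.mul γ (Γ.mul η (Γ.mul (Γ.inv η) (Γ.inv γ) hm) hη)
          (h.trans (Γ.r_mul _ _ _).symm) := (Γ.mul_assoc γ η _ h hη).symm
    _ = Γ.mul γ (Γ.inv γ) (Γ.inv_comp₁ γ) := Γ.mul_congr rfl e1 _ _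
    _ = Γ.u (Γ.r γ) := Γ.mul_inv γ
    _ = Γ.u (Γ.r (Γ.mul γ η h)) := congrArg Γ.u (Γ.r_mul γ η h).symm

end Gpd

namespace RightGpdAction

variable {G G0 X : Type*} {Γ : Gpd G G0} (A : RightGpdAction Γ X)

theorem act_congr {x y : X} {γ δ : G} (hx : x = y) (hγ : γ = δ)
    (h : A.ε x = Γ.r γ) (h' : A.ε y = Γ.r δ) : A.act x γ h = A.act y δ h' := by
  subst hx; subst hγ; rfl

theorem act_act_inv (x : X) (γ : G) (h : A.ε x = Γ.r γ) :
    A.act (A.act x γ h) (Γ.inv γ) ((A.ε_act x γ h).trans (Γ.inv_comp₁ γ)) = x :=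
  calc _ = A.act x (Γ.mul γ (Γ.inv γ) (Γ.inv_comp₁ γ)) (h.trans (Γ.r_mul _ _ _).symm) :=
        A.act_mul x γ (Γ.inv γ) h _
    _ = A.act x (Γ.u (A.ε x)) (Γ.r_u _).symm :=
        A.act_congr rfl ((Γ.mul_inv γ).trans (congrArg Γ.u h.symm)) _ _
    _ = x := A.act_u x

end RightGpdAction

namespace LeftGpdAction

variable {G G0 X : Type*} {Γ : Gpd G G0} (A : LeftGpdAction Γ X)

theorem act_congr {γ δ : G} {x y : X} (hγ : γ = δ) (hx : x = y)
    (h : Γ.s γ = A.ρ x) (h' : Γ.s δ = A.ρ y) : A.act γ x h = A.act δ y h' := by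
  subst hγ; subst hx; rfl

theorem act_inv_act (γ : G) (x : X) (h : Γ.s γ = A.ρ x) :
    A.act (Γ.inv γ) (A.act γ x h) ((Γ.inv_comp₂ γ).trans (A.ρ_act γ x h).symm) = x :=
  calc _ = A.act (Γ.mul (Γ.inv γ) γ (Γ.inv_comp₂ γ)) x ((Γ.s_mul _ _ _).trans h) :=
        A.act_mul (Γ.inv γ) γ x h _
    _ = A.act (Γ.u (A.ρ x)) x (Γ.s_u _) :=
        A.act_congr ((Γ.inv_mul γ).trans (congrArg Γ.u h)) rfl _ _
    _ = x := A.act_u x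

theorem act_act_inv (γ : G) (x : X) (h : Γ.s (Γ.inv γ) = A.ρ x) :
    A.act γ (A.act (Γ.inv γ) x h)
      ((Γ.inv_comp₁ γ).trans (A.ρ_act (Γ.inv γ) x h).symm) = x :=
  calc _ = A.act (Γ.mul γ (Γ.inv γ) (Γ.inv_comp₁ γ)) x ((Γ.s_mul _ _ _).trans h) :=
        A.act_mul γ (Γ.inv γ) x h _
    _ = A.act (Γ.u (A.ρ x)) x (Γ.s_u _) :=
        A.act_congr ((Γ.mul_inv γ).trans
          (congrArg Γ.u ((Γ.inv_comp₂ γ).symm.trans h))) rfl _ _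
    _ = x := A.act_u x

theorem act_u_eq {x : X} {γ : G} (hγ : γ = Γ.u (A.ρ x)) (h : Γ.s γ = A.ρ x) :
    A.act γ x h = x := by
  subst hγ; exact A.act_u x

end LeftGpdAction

namespace Bibundle

variable {H H0 G G0 P : Type*} {ΓH : Gpd H H0} {ΓG : Gpd G G0} (B : Bibundle ΓH ΓG P)

theorem isPrincipal_iff : B.IsPrincipal ↔ Function.Surjective B.L.ρ ∧
    (∀ p γ γ' (h : B.R.ε p = ΓG.r γ) (h' : B.R.ε p = ΓG.r γ'),
      B.R.act p γ h = B.R.act p γ' h' → γ = γ') ∧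
    (∀ p q, B.L.ρ p = B.L.ρ q → ∃ γ h, B.R.act p γ h = q) := by
  refine and_congr_right fun _ => and_congr ⟨?_, ?_⟩ ⟨?_, ?_⟩
  · intro hinj p γ γ' h h' e
    exact congrArg (fun z => z.1.2)
      (hinj (a₁ := ⟨(p, γ), h⟩) (a₂ := ⟨(p, γ'), h'⟩) (Subtype.ext (Prod.ext rfl e)))
  · rintro hfree ⟨⟨p, γ⟩, h⟩ ⟨⟨p', γ'⟩, h'⟩ e
    obtain ⟨rfl, e⟩ := Prod.ext_iff.mp (congrArg Subtype.val e)
    exact Subtype.ext (Prod.ext rfl (hfree p γ γ' h h' e))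
  · rintro hsurj p q hpq
    obtain ⟨⟨⟨p', γ⟩, h⟩, e⟩ := hsurj ⟨(p, q), hpq⟩
    obtain ⟨rfl, e⟩ := Prod.ext_iff.mp (congrArg Subtype.val e)
    exact ⟨γ, h, e⟩
  · rintro htrans ⟨⟨p, q⟩, hpq⟩
    obtain ⟨γ, h, e⟩ := htrans p q hpq
    exact ⟨⟨(p, γ), h⟩, Subtype.ext (Prod.ext rfl e)⟩

end Bibundle

section Composition

variable {H H0 G G0 L L0 P P' : Type*} {ΓH : Gpd H H0} {ΓG : Gpd G G0} {ΓL : Gpd L L0}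
  {B : Bibundle ΓH ΓG P} {B' : Bibundle ΓG ΓL P'}

namespace FP

def leftAct (γ : H) (a : FP B B') (h : ΓH.s γ = B.L.ρ a.1.1) : FP B B' :=
  ⟨(B.L.act γ a.1.1 h, a.1.2), (B.ε_Lact γ a.1.1 h).trans a.2⟩

def rightAct (a : FP B B') (γ : L) (h : B'.R.ε a.1.2 = ΓL.r γ) : FP B B' :=
  ⟨(a.1.1, B'.R.act a.1.2 γ h), a.2.trans (B'.ρ_Ract a.1.2 γ h).symm⟩

theorem leftAct_leftAct (γ₁ γ₂ : H) (a : FP B B') (h : ΓH.s γ₂ = B.L.ρ a.1.1)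
    (hm : ΓH.s γ₁ = ΓH.r γ₂) (h' : ΓH.s γ₁ = B.L.ρ (leftAct γ₂ a h).1.1) :
    leftAct γ₁ (leftAct γ₂ a h) h' =
      leftAct (ΓH.mul γ₁ γ₂ hm) a ((ΓH.s_mul _ _ _).trans h) :=
  Subtype.ext (Prod.ext (B.L.act_mul γ₁ γ₂ a.1.1 h hm) rfl)

theorem rightAct_rightAct (a : FP B B') (γ₁ γ₂ : L) (h : B'.R.ε a.1.2 = ΓL.r γ₁)
    (hm : ΓL.s γ₁ = ΓL.r γ₂) (h' : B'.R.ε (rightAct a γ₁ h).1.2 = ΓL.r γ₂) :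
    rightAct (rightAct a γ₁ h) γ₂ h' =
      rightAct a (ΓL.mul γ₁ γ₂ hm) (h.trans (ΓL.r_mul _ _ _).symm) :=
  Subtype.ext (Prod.ext rfl (B'.R.act_mul a.1.2 γ₁ γ₂ h hm))

end FP

namespace BibCompRel

theorem refl (a : FP B B') : BibCompRel B B' a a := by
  refine ⟨ΓG.u (B.R.ε a.1.1), (ΓG.r_u _).symm, (B.R.act_u a.1.1).symm, ?_⟩
  exact (B'.L.act_u_eq ((ΓG.inv_u _).trans (congrArg ΓG.u a.2)) _).symm

theorem symm {a b : FP B B'} (hab : BibCompRel B B' a b) : BibCompRel B B' b a := by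
  obtain ⟨γ, h, e1, e2⟩ := hab
  have h2 : B.R.ε b.1.1 = ΓG.r (ΓG.inv γ) :=
    (congrArg B.R.ε e1).trans ((B.R.ε_act _ _ _).trans (ΓG.inv_comp₁ γ))
  refine ⟨ΓG.inv γ, h2, ?_, ?_⟩
  · exact (B.R.act_act_inv a.1.1 γ h).symm.trans (B.R.act_congr e1.symm rfl _ _)
  · exact (B'.L.act_act_inv γ a.1.2 _).symm.trans
      (B'.L.act_congr (ΓG.inv_inv γ).symm e2.symm _ _)

theorem trans {a b c : FP B B'} (hab : BibCompRel B B' a b) (hbc : BibCompRel B B' b c) :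
    BibCompRel B B' a c := by
  obtain ⟨γ, h, e1, e2⟩ := hab
  obtain ⟨δ, h', f1, f2⟩ := hbc
  have hc : ΓG.s γ = ΓG.r δ := ((congrArg B.R.ε e1).trans (B.R.ε_act _ _ _)).symm.trans h'
  have hr : B.R.ε a.1.1 = ΓG.r (ΓG.mul γ δ hc) := h.trans (ΓG.r_mul _ _ _).symm
  refine ⟨ΓG.mul γ δ hc, hr, ?_, ?_⟩
  · exact f1.trans ((B.R.act_congr e1 rfl _ _).trans (B.R.act_mul a.1.1 γ δ h hc))
  · calc c.1.2 = B'.L.act (ΓG.inv δ) (B'.L.act (ΓG.inv γ) a.1.2 _)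
          ((ΓG.inv_comp₂ δ).trans ((hc.symm.trans (ΓG.inv_comp₁ γ)).trans
            (B'.L.ρ_act _ _ _).symm)) := f2.trans (B'.L.act_congr rfl e2 _ _)
      _ = B'.L.act (ΓG.mul (ΓG.inv δ) (ΓG.inv γ)
            ((ΓG.inv_comp₂ δ).trans (hc.symm.trans (ΓG.inv_comp₁ γ)))) a.1.2
          ((ΓG.s_mul _ _ _).trans ((ΓG.inv_comp₂ γ).trans (h.symm.trans a.2))) :=
        B'.L.act_mul _ _ _ _ _
      _ = _ := B'.L.act_congr (ΓG.mul_inv_rev hc).symm rfl _ _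

theorem equivalence : Equivalence (BibCompRel B B') :=
  ⟨refl, symm, trans⟩

theorem of_mk_eq {a b : FP B B'}
    (h : (Quot.mk (BibCompRel B B') a : CompCarrier B B') = Quot.mk _ b) :
    BibCompRel B B' a b :=
  equivalence.eqvGen_iff.mp (Quot.eq.mp h)

theorem out_mk (a : FP B B') : BibCompRel B B' (Quot.out (Quot.mk _ a : CompCarrier B B')) a :=
  of_mk_eq (Quot.out_eq _)

theorem ρ_eq {a b : FP B B'} (hab : BibCompRel B B' a b) : B.L.ρ a.1.1 = B.L.ρ b.1.1 := by
  obtain ⟨γ, h, e1, _⟩ := hab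
  rw [e1, B.ρ_Ract]

theorem ε_eq {a b : FP B B'} (hab : BibCompRel B B' a b) : B'.R.ε a.1.2 = B'.R.ε b.1.2 := by
  obtain ⟨γ, h, _, e2⟩ := hab
  rw [e2, B'.ε_Lact]

theorem snd_eq_of_fst_eq (hB : B.IsPrincipal) {a b : FP B B'} (hab : BibCompRel B B' a b)
    (hfst : a.1.1 = b.1.1) : a.1.2 = b.1.2 := by
  obtain ⟨γ, h, e1, e2⟩ := hab
  have hγ : γ = ΓG.u (B.R.ε a.1.1) :=
    (B.isPrincipal_iff.mp hB).2.1 _ _ _ h (ΓG.r_u _).symm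
      (e1.symm.trans (hfst.symm.trans (B.R.act_u a.1.1).symm))
  refine (e2.trans (B'.L.act_u_eq ?_ _)).symm
  rw [hγ, ΓG.inv_u, a.2]

theorem leftAct {a b : FP B B'} (γ : H) (hab : BibCompRel B B' a b)
    (h : ΓH.s γ = B.L.ρ a.1.1) (h' : ΓH.s γ = B.L.ρ b.1.1) :
    BibCompRel B B' (a.leftAct γ h) (b.leftAct γ h') := by
  obtain ⟨δ, hδ, e1, e2⟩ := hab
  refine ⟨δ, (B.ε_Lact γ a.1.1 h).trans hδ, ?_, e2.trans (B'.L.act_congr rfl rfl _ _)⟩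
  exact (B.L.act_congr rfl e1 _ _).trans (B.commute γ a.1.1 δ h hδ)

theorem rightAct {a b : FP B B'} (γ : L) (hab : BibCompRel B B' a b)
    (h : B'.R.ε a.1.2 = ΓL.r γ) (h' : B'.R.ε b.1.2 = ΓL.r γ) :
    BibCompRel B B' (a.rightAct γ h) (b.rightAct γ h') := by
  obtain ⟨δ, hδ, e1, e2⟩ := hab
  refine ⟨δ, hδ, e1, ?_⟩
  exact (B'.R.act_congr e2 rfl _ _).trans (B'.commute _ _ _ _ _).symm

end BibCompRel

namespace CompCarrier

def ρ : CompCarrier B B' → H0 :=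
  Quot.lift (fun a => B.L.ρ a.1.1) fun _ _ => BibCompRel.ρ_eq

def ε : CompCarrier B B' → L0 :=
  Quot.lift (fun a => B'.R.ε a.1.2) fun _ _ => BibCompRel.ε_eq

noncomputable def leftAct (γ : H) (q : CompCarrier B B') (h : ΓH.s γ = q.ρ) :
    CompCarrier B B' :=
  Quot.mk _ (q.out.leftAct γ (h.trans (congrArg ρ (Quot.out_eq q).symm)))

noncomputable def rightAct (q : CompCarrier B B') (γ : L) (h : q.ε = ΓL.r γ) :
    CompCarrier B B' :=
  Quot.mk _ (q.out.rightAct γ ((congrArg ε (Quot.out_eq q)).trans h))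

@[simp]
theorem leftAct_mk (γ : H) (a : FP B B') (h : ΓH.s γ = ρ (Quot.mk _ a)) :
    leftAct γ (Quot.mk _ a) h = Quot.mk _ (a.leftAct γ h) :=
  Quot.sound ((BibCompRel.out_mk a).leftAct γ _ _)

@[simp]
theorem rightAct_mk (a : FP B B') (γ : L) (h : ε (Quot.mk _ a) = ΓL.r γ) :
    rightAct (Quot.mk _ a) γ h = Quot.mk _ (a.rightAct γ h) :=
  Quot.sound ((BibCompRel.out_mk a).rightAct γ _ _)

end CompCarrier

end Composition

namespace Bibundle

variable {H H0 G G0 L L0 P P' : Type*} {ΓH : Gpd H H0} {ΓG : Gpd G G0} {ΓL : Gpd L L0}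

open CompCarrier in
noncomputable def comp (B : Bibundle ΓH ΓG P) (B' : Bibundle ΓG ΓL P') :
    Bibundle ΓH ΓL (CompCarrier B B') where
  L :=
    { ρ := ρ
      act := leftAct
      ρ_act := by
        rintro γ ⟨a⟩ h
        simp only [leftAct_mk]
        exact B.L.ρ_act γ a.1.1 h
      act_u := by
        rintro ⟨a⟩
        simp only [leftAct_mk]
        exact congrArg _ (Subtype.ext (Prod.ext (B.L.act_u a.1.1) rfl))
      act_mul := by
        rintro γ₁ γ₂ ⟨a⟩ h hm
        simp only [leftAct_mk]
        exact congrArg _ (FP.leftAct_leftAct γ₁ γ₂ a h hm _) }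
  R :=
    { ε := ε
      act := rightAct
      ε_act := by
        rintro ⟨a⟩ γ h
        simp only [rightAct_mk]
        exact B'.R.ε_act a.1.2 γ h
      act_u := by
        rintro ⟨a⟩
        simp only [rightAct_mk]
        exact congrArg _ (Subtype.ext (Prod.ext rfl (B'.R.act_u a.1.2)))
      act_mul := by
        rintro ⟨a⟩ γ₁ γ₂ h hm
        simp only [rightAct_mk]
        exact congrArg _ (FP.rightAct_rightAct a γ₁ γ₂ h hm _) }
  ε_Lact := by
    rintro γ ⟨a⟩ h
    simp only [leftAct_mk]
    rfl
  ρ_Ract := by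
    rintro ⟨a⟩ γ h
    simp only [rightAct_mk]
    rfl
  commute := by
    rintro γ ⟨a⟩ η h₁ h₂
    simp only [leftAct_mk, rightAct_mk]
    rfl

theorem compCompatible_comp (B : Bibundle ΓH ΓG P) (B' : Bibundle ΓG ΓL P') :
    CompCompatible B B' (B.comp B') :=
  ⟨fun _ => rfl, fun _ => rfl, fun a γ h _ => CompCarrier.rightAct_mk a γ h,
    fun a γ h _ => CompCarrier.leftAct_mk γ a h⟩

theorem comp_isPrincipal {B : Bibundle ΓH ΓG P} {B' : Bibundle ΓG ΓL P'}
    (hB : B.IsPrincipal) (hB' : B'.IsPrincipal) :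
    (B.comp B').IsPrincipal := by
  obtain ⟨hρ, -, htrans⟩ := B.isPrincipal_iff.mp hB
  obtain ⟨hρ', hfree', htrans'⟩ := B'.isPrincipal_iff.mp hB'
  refine (B.comp B').isPrincipal_iff.mpr ⟨fun x => ?_, ?_, ?_⟩
  · obtain ⟨p, rfl⟩ := hρ x
    obtain ⟨p', hp'⟩ := hρ' (B.R.ε p)
    exact ⟨Quot.mk _ ⟨(p, p'), hp'.symm⟩, rfl⟩
  · rintro ⟨a⟩ l₁ l₂ h₁ h₂ e
    have hrel := BibCompRel.of_mk_eq ((CompCarrier.rightAct_mk a l₁ h₁).symm.trans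
      (e.trans (CompCarrier.rightAct_mk a l₂ h₂)))
    exact hfree' a.1.2 l₁ l₂ h₁ h₂ (hrel.snd_eq_of_fst_eq hB rfl)
  · rintro ⟨a⟩ ⟨b⟩ hab
    obtain ⟨γ, hγ, eb⟩ := htrans a.1.1 b.1.1 hab
    have hsγ : ΓG.s γ = B'.L.ρ b.1.2 :=
      (B.R.ε_act a.1.1 γ hγ).symm.trans ((congrArg B.R.ε eb).trans b.2)
    obtain ⟨l, hl, el⟩ := htrans' a.1.2 (B'.L.act γ b.1.2 hsγ)
      (a.2.symm.trans (hγ.trans (B'.L.ρ_act γ b.1.2 hsγ).symm))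
    refine ⟨l, hl, (CompCarrier.rightAct_mk a l hl).trans
      (Quot.sound ⟨γ, hγ, eb.symm, ?_⟩)⟩
    exact (B'.L.act_inv_act γ b.1.2 hsγ).symm.trans (B'.L.act_congr rfl el.symm _ _)

end Bibundle

section Assoc

variable {H H0 G G0 L L0 K K0 P P' P'' : Type*} {ΓH : Gpd H H0} {ΓG : Gpd G G0}
  {ΓL : Gpd L L0} {ΓK : Gpd K K0}
  {B : Bibundle ΓH ΓG P} {B' : Bibundle ΓG ΓL P'} {B'' : Bibundle ΓL ΓK P''}
  {S12 : Bibundle ΓH ΓL (CompCarrier B B')} {S23 : Bibundle ΓG ΓK (CompCarrier B' B'')}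

def reassocRight (c23 : CompCompatible B' B'' S23) (a : FP B B') (p'' : P'')
    (h : B'.R.ε a.1.2 = B''.L.ρ p'') : CompCarrier B S23 :=
  Quot.mk _ ⟨(a.1.1, Quot.mk _ (⟨(a.1.2, p''), h⟩ : FP B' B'')),
    a.2.trans (c23.1 ⟨(a.1.2, p''), h⟩).symm⟩

def reassocLeft (c12 : CompCompatible B B' S12) (p : P) (b : FP B' B'')
    (h : B.R.ε p = B'.L.ρ b.1.1) : CompCarrier S12 B'' :=
  Quot.mk _ ⟨(Quot.mk _ (⟨(p, b.1.1), h⟩ : FP B B'), b.1.2),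
    (c12.2.1 ⟨(p, b.1.1), h⟩).trans b.2⟩

theorem reassocRight_eq_of_rel (c23 : CompCompatible B' B'' S23) {a b : FP B B'}
    (hab : BibCompRel B B' a b) (p'' : P'')
    (ha : B'.R.ε a.1.2 = B''.L.ρ p'') (hb : B'.R.ε b.1.2 = B''.L.ρ p'') :
    reassocRight c23 a p'' ha = reassocRight c23 b p'' hb := by
  obtain ⟨γ, hγ, e1, e2⟩ := hab
  apply Quot.sound
  refine ⟨γ, hγ, e1, ?_⟩
  have hs : ΓG.s (ΓG.inv γ) = B'.L.ρ a.1.2 := (ΓG.inv_comp₂ γ).trans (hγ.symm.trans a.2)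
  refine Eq.trans ?_ (c23.2.2.2 ⟨(a.1.2, p''), ha⟩ (ΓG.inv γ) _ hs).symm
  exact congrArg (Quot.mk _) (Subtype.ext (Prod.ext e2 rfl))

theorem reassocLeft_eq_of_rel (c12 : CompCompatible B B' S12) {b b' : FP B' B''}
    (hbb : BibCompRel B' B'' b b') (p : P)
    (hb : B.R.ε p = B'.L.ρ b.1.1) (hb' : B.R.ε p = B'.L.ρ b'.1.1) :
    reassocLeft c12 p b hb = reassocLeft c12 p b' hb' := by
  obtain ⟨l, hl, e1, e2⟩ := hbb
  apply Quot.sound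
  refine ⟨l, (c12.2.1 _).trans hl, ?_, e2⟩
  refine Eq.trans ?_ (c12.2.2.1 ⟨(p, b.1.1), hb⟩ l _ hl).symm
  exact congrArg (Quot.mk _) (Subtype.ext (Prod.ext rfl e1))

theorem reassocRight_rightAct (c23 : CompCompatible B' B'' S23) (a : FP B B') (p'' : P'')
    (l : L) (h : B'.R.ε a.1.2 = B''.L.ρ p'')
    (hl : B'.R.ε a.1.2 = ΓL.r l) (hl' : ΓL.s (ΓL.inv l) = B''.L.ρ p'') :
    reassocRight c23 a p'' h = reassocRight c23 (a.rightAct l hl) (B''.L.act (ΓL.inv l) p'' hl')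
      ((B'.R.ε_act _ _ _).trans ((ΓL.inv_comp₁ l).trans (B''.L.ρ_act _ _ _).symm)) :=
  congrArg (Quot.mk _) (Subtype.ext (Prod.ext rfl
    (Quot.sound (show BibCompRel B' B'' _ _ from ⟨l, hl, rfl, rfl⟩))))

theorem reassocLeft_leftAct (c12 : CompCompatible B B' S12) (p : P) (b : FP B' B'')
    (γ : G) (h : B.R.ε p = B'.L.ρ b.1.1)
    (hγ : B.R.ε p = ΓG.r γ) (hγ' : ΓG.s (ΓG.inv γ) = B'.L.ρ b.1.1) :
    reassocLeft c12 p b h = reassocLeft c12 (B.R.act p γ hγ) (b.leftAct (ΓG.inv γ) hγ')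
      ((B.R.ε_act _ _ _).trans ((ΓG.inv_comp₁ γ).trans (B'.L.ρ_act _ _ _).symm)) :=
  congrArg (Quot.mk _) (Subtype.ext (Prod.ext
    (Quot.sound (show BibCompRel B B' _ _ from ⟨γ, hγ, rfl, rfl⟩)) rfl))

variable (c12 : CompCompatible B B' S12) (c23 : CompCompatible B' B'' S23)

noncomputable def assocFwd (x : FP S12 B'') : CompCarrier B S23 :=
  reassocRight c23 x.1.1.out x.1.2
    ((c12.2.1 _).symm.trans ((congrArg S12.R.ε (Quot.out_eq _)).trans x.2))

noncomputable def assocBwd (x : FP B S23) : CompCarrier S12 B'' :=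
  reassocLeft c12 x.1.1 x.1.2.out
    (x.2.trans ((congrArg S23.L.ρ (Quot.out_eq _).symm).trans (c23.1 _)))

theorem assocFwd_eq {a : FP B B'} {q : CompCarrier B B'} (hq : Quot.mk _ a = q) (p'' : P'')
    (h : S12.R.ε q = B''.L.ρ p'') (h' : B'.R.ε a.1.2 = B''.L.ρ p'') :
    assocFwd c12 c23 ⟨(q, p''), h⟩ = reassocRight c23 a p'' h' := by
  subst hq
  exact reassocRight_eq_of_rel c23 (BibCompRel.out_mk a) p'' _ _

theorem assocBwd_eq {b : FP B' B''} {q : CompCarrier B' B''} (hq : Quot.mk _ b = q) (p : P)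
    (h : B.R.ε p = S23.L.ρ q) (h' : B.R.ε p = B'.L.ρ b.1.1) :
    assocBwd c12 c23 ⟨(p, q), h⟩ = reassocLeft c12 p b h' := by
  subst hq
  exact reassocLeft_eq_of_rel c12 (BibCompRel.out_mk b) p _ _

theorem assocFwd_sound (x y : FP S12 B'') (hxy : BibCompRel S12 B'' x y) :
    assocFwd c12 c23 x = assocFwd c12 c23 y := by
  obtain ⟨⟨⟨a⟩, p''⟩, hx⟩ := x
  obtain ⟨⟨q, _⟩, hy⟩ := y
  obtain ⟨l, hl, rfl, rfl⟩ := hxy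
  have hl' : B'.R.ε a.1.2 = ΓL.r l := (c12.2.1 a).symm.trans hl
  rw [assocFwd_eq c12 c23 rfl p'' hx ((c12.2.1 a).symm.trans hx),
    assocFwd_eq c12 c23 (c12.2.2.1 a l hl hl').symm]
  exact reassocRight_rightAct c23 a p'' l _ hl' _

theorem assocBwd_sound (x y : FP B S23) (hxy : BibCompRel B S23 x y) :
    assocBwd c12 c23 x = assocBwd c12 c23 y := by
  obtain ⟨⟨p, ⟨b⟩⟩, hx⟩ := x
  obtain ⟨⟨_, q⟩, hy⟩ := y
  obtain ⟨γ, hγ, rfl, rfl⟩ := hxy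
  have hγ' : ΓG.s (ΓG.inv γ) = B'.L.ρ b.1.1 :=
    (ΓG.inv_comp₂ γ).trans (hγ.symm.trans (hx.trans (c23.1 b)))
  rw [assocBwd_eq c12 c23 rfl p hx (hx.trans (c23.1 b)),
    assocBwd_eq c12 c23 (c23.2.2.2 b (ΓG.inv γ) _ hγ').symm]
  exact reassocLeft_leftAct c12 p b γ _ hγ hγ'

noncomputable def assocEquiv : CompCarrier S12 B'' ≃ CompCarrier B S23 where
  toFun := Quot.lift (assocFwd c12 c23) (assocFwd_sound c12 c23)
  invFun := Quot.lift (assocBwd c12 c23) (assocBwd_sound c12 c23)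
  left_inv := by
    rintro ⟨⟨⟨a⟩, p''⟩, h⟩
    exact (congrArg (Quot.lift _ (assocBwd_sound c12 c23))
      (assocFwd_eq c12 c23 rfl p'' h ((c12.2.1 a).symm.trans h))).trans
      (assocBwd_eq c12 c23 rfl _ _ _)
  right_inv := by
    rintro ⟨⟨p, ⟨b⟩⟩, h⟩
    exact (congrArg (Quot.lift _ (assocFwd_sound c12 c23))
      (assocBwd_eq c12 c23 rfl p h (h.trans (c23.1 b)))).trans
      (assocFwd_eq c12 c23 rfl _ _ _)

theorem assocEquiv_mk_mk (a : FP B B') (p'' : P'') (h : S12.R.ε (Quot.mk _ a) = B''.L.ρ p'')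
    (h' : B'.R.ε a.1.2 = B''.L.ρ p'') :
    assocEquiv c12 c23 (Quot.mk _ ⟨(Quot.mk _ a, p''), h⟩) = reassocRight c23 a p'' h' :=
  assocFwd_eq c12 c23 rfl p'' h h'

end Assoc

theorem comp_bibundle_principal_and_assoc_general
    {H H0 G G0 L L0 K K0 : Type*}
    (ΓH : Gpd H H0) (ΓG : Gpd G G0) (ΓL : Gpd L L0) (ΓK : Gpd K K0)
    {P P' P'' : Type*}
    (B : Bibundle ΓH ΓG P) (B' : Bibundle ΓG ΓL P') (B'' : Bibundle ΓL ΓK P'')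
    (hB : B.IsPrincipal) (hB' : B'.IsPrincipal) :
    (∃ S : Bibundle ΓH ΓL (CompCarrier B B'),
        S.IsPrincipal ∧ CompCompatible B B' S) ∧
    (∀ (S12 : Bibundle ΓH ΓL (CompCarrier B B'))
        (S23 : Bibundle ΓG ΓK (CompCarrier B' B'')),
        S12.IsPrincipal → S23.IsPrincipal →
        CompCompatible B B' S12 → CompCompatible B' B'' S23 →
        ∃ e : CompCarrier S12 B'' ≃ CompCarrier B S23,
          ∀ (p : P) (p' : P') (p'' : P'')
            (h₁ : B.R.ε p = B'.L.ρ p')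
            (h₂ : S12.R.ε (Quot.mk _ (⟨(p, p'), h₁⟩ : FP B B')) = B''.L.ρ p'')
            (h₃ : B'.R.ε p' = B''.L.ρ p'')
            (h₄ : B.R.ε p = S23.L.ρ (Quot.mk _ (⟨(p', p''), h₃⟩ : FP B' B''))),
            e (Quot.mk _ (⟨(Quot.mk _ (⟨(p, p'), h₁⟩ : FP B B'), p''), h₂⟩ :
                FP S12 B'')) =
              Quot.mk _ (⟨(p, Quot.mk _ (⟨(p', p''), h₃⟩ : FP B' B'')), h₄⟩ :
                FP B S23)) :=
  ⟨⟨B.comp B', Bibundle.comp_isPrincipal hB hB', B.compCompatible_comp B'⟩,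
    fun _ _ _ _ c12 c23 => ⟨assocEquiv c12 c23, fun p p' p'' h₁ h₂ h₃ _ =>
      assocEquiv_mk_mk c12 c23 ⟨(p, p'), h₁⟩ p'' h₂ h₃⟩⟩

/-- Composition of generalized morphisms: the quotient `P ×_G P'` carries a right
principal `L`-bundle structure from `H` to `L`, and composition is associative up
to isomorphism of the underlying principal bibundles. -/
theorem comp_bibundle_principal_and_assoc
    {H H0 G G0 L L0 K K0 : Type*}
    (ΓH : Gpd H H0) (ΓG : Gpd G G0) (ΓL : Gpd L L0) (ΓK : Gpd K K0)
    {P P' P'' : Type*}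
    (B : Bibundle ΓH ΓG P) (B' : Bibundle ΓG ΓL P') (B'' : Bibundle ΓL ΓK P'')
    (hB : B.IsPrincipal) (hB' : B'.IsPrincipal) (hB'' : B''.IsPrincipal) :
    (∃ S : Bibundle ΓH ΓL (CompCarrier B B'),
        S.IsPrincipal ∧ CompCompatible B B' S) ∧
    (∀ (S12 : Bibundle ΓH ΓL (CompCarrier B B'))
        (S23 : Bibundle ΓG ΓK (CompCarrier B' B'')),
        S12.IsPrincipal → S23.IsPrincipal →
        CompCompatible B B' S12 → CompCompatible B' B'' S23 →
        ∃ e : CompCarrier S12 B'' ≃ CompCarrier B S23,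
          ∀ (p : P) (p' : P') (p'' : P'')
            (h₁ : B.R.ε p = B'.L.ρ p')
            (h₂ : S12.R.ε (Quot.mk _ (⟨(p, p'), h₁⟩ : FP B B')) = B''.L.ρ p'')
            (h₃ : B'.R.ε p' = B''.L.ρ p'')
            (h₄ : B.R.ε p = S23.L.ρ (Quot.mk _ (⟨(p', p''), h₃⟩ : FP B' B''))),
            e (Quot.mk _ (⟨(Quot.mk _ (⟨(p, p'), h₁⟩ : FP B B'), p''), h₂⟩ :
                FP S12 B'')) =
              Quot.mk _ (⟨(p, Quot.mk _ (⟨(p', p''), h₃⟩ : FP B' B'')), h₄⟩ :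
                FP B S23)) :=
  comp_bibundle_principal_and_assoc_general ΓH ΓG ΓL ΓK B B' B'' hB hB'
end

section
/- The deformation to the normal cone is functorial: if f : M → M' is a smooth map with f(X) ⊂ X' for submanifolds X ⊂ M, X' ⊂ M', then the map D(f) : D_X^M → D_{X'}^{M'} defined by D(f)(m,t) = (f(m),t) for t ≠ 0 and D(f)(x,ξ,0) = (f(x), d_Nf_x(ξ), 0) is smooth, and D(g∘f) = D(g)∘D(f), D(id) = id. -/
set_option maxHeartbeats 1000000
open scoped ContDiff


variable {E₁ E₂ F₁ F₂ G₁ G₂ : Type*}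
  [NormedAddCommGroup E₁] [NormedSpace ℝ E₁]
  [NormedAddCommGroup E₂] [NormedSpace ℝ E₂]
  [NormedAddCommGroup F₁] [NormedSpace ℝ F₁]
  [NormedAddCommGroup F₂] [NormedSpace ℝ F₂]
  [NormedAddCommGroup G₁] [NormedSpace ℝ G₁]
  [NormedAddCommGroup G₂] [NormedSpace ℝ G₂]

/-- The map `D(f)` induced on deformations to the normal cone (in slice
coordinates, where the submanifold is `E₁ × {0} ⊂ E₁ × E₂` and the normal
bundle is identified with `E₁ × E₂`): for `t ≠ 0` it is
`(m,t) ↦ (f(m),t)` read through `ψ`, and at `t = 0` it is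
`(x,ξ,0) ↦ (f(x), d_Nf_x(ξ), 0)`, the normal component of the derivative. -/
noncomputable def dncMap (f : E₁ × E₂ → F₁ × F₂) :
    E₁ × E₂ × ℝ → F₁ × F₂ × ℝ :=
  fun z =>
    if z.2.2 = 0 then
      ((f (z.1, 0)).1, (fderiv ℝ f (z.1, 0) (0, z.2.1)).2, 0)
    else
      ((f (z.1, z.2.2 • z.2.1)).1, z.2.2⁻¹ • (f (z.1, z.2.2 • z.2.1)).2, z.2.2)


section DividedDifferenceAux

variable {P F : Type*} [NormedAddCommGroup P] [NormedSpace ℝ P]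
  [NormedAddCommGroup F] [NormedSpace ℝ F]

/-- projection `(q,t) ↦ (q,0)` -/
noncomputable def rhoP (P : Type*) [NormedAddCommGroup P] [NormedSpace ℝ P] : (P × ℝ) →L[ℝ] (P × ℝ) :=
  (ContinuousLinearMap.inl ℝ P ℝ).comp (ContinuousLinearMap.fst ℝ P ℝ)

noncomputable def ddTerm {n : ℕ} (c : ContinuousMultilinearMap ℝ (fun _ : Fin (n+1) => P × ℝ) F)
    (i : Fin (n+1)) : ContinuousMultilinearMap ℝ (fun _ : Fin n => P × ℝ) F :=
  ((c.compContinuousLinearMap (fun j => if (j:ℕ) < (i:ℕ) then rhoP P else ContinuousLinearMap.id ℝ (P×ℝ))).domDomCongr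
    (Equiv.swap 0 i)).curryLeft ((0:P),(1:ℝ))

example {n : ℕ} (c : ContinuousMultilinearMap ℝ (fun _ : Fin (n+1) => P × ℝ) F)
    (i : Fin (n+1)) (v : Fin n → P × ℝ) : True := by
  have h : ddTerm c i v = c (fun j => (if (j:ℕ) < (i:ℕ) then rhoP P else ContinuousLinearMap.id ℝ (P×ℝ))
      ((Fin.cons ((0:P),(1:ℝ)) v : Fin (n+1) → P × ℝ) ((Equiv.swap 0 i) j))) := by
    simp [ddTerm, ContinuousMultilinearMap.curryLeft_apply, ContinuousMultilinearMap.domDomCongr_apply,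
      ContinuousMultilinearMap.compContinuousLinearMap_apply]
  trivial

/-- Divided difference of `Θ` in the last variable, extended by the partial derivative. -/
noncomputable def hdd (Θ : P × ℝ → F) : P × ℝ → F :=
  fun z => if z.2 = 0 then fderiv ℝ Θ z ((0:P),(1:ℝ)) else z.2⁻¹ • Θ z

end DividedDifferenceAux

section HadamardSmooth

universe uP uF

open scoped ContDiff

/-- Smoothness of parametric interval integrals over `[0,1]`. -/
theorem pint_contDiff_nat {X : Type uP} [NormedAddCommGroup X] [NormedSpace ℝ X] (n : ℕ) :
    ∀ {F : Type (max uP uF)} [NormedAddCommGroup F] [NormedSpace ℝ F] [CompleteSpace F]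
    (G : X × ℝ → F), ContDiff ℝ n G → ContDiff ℝ n (fun x => ∫ s in (0:ℝ)..1, G (x, s)) := by
  induction n with
  | zero =>
    intro F _ _ _ G hG
    rw [Nat.cast_zero, contDiff_zero] at hG ⊢
    exact intervalIntegral.continuous_parametric_intervalIntegral_of_continuous'
      (f := fun x s => G (x, s)) hG 0 1
  | succ n ih =>
    intro F _ _ _ G hG
    rw [Nat.cast_succ] at hG ⊢
    have hG1 : Differentiable ℝ G := hG.differentiable (by simp)
    set D : X × ℝ → (X →L[ℝ] F) := fun p => (fderiv ℝ G p).comp (ContinuousLinearMap.inl ℝ X ℝ)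
      with hD
    have hDc : ContDiff ℝ n D :=
      (hG.fderiv_right (m := n) le_rfl).clm_comp contDiff_const
    have hDcont : Continuous D := hDc.continuous
    have hderiv : ∀ x₀, HasFDerivAt (fun x => ∫ s in (0:ℝ)..1, G (x, s))
        (∫ s in (0:ℝ)..1, D (x₀, s)) x₀ := by
      intro x₀
      obtain ⟨C, hC⟩ : ∃ C, ∀ y ∈ Set.Icc (0:ℝ) 1, ‖D (x₀, y)‖ ≤ C :=
        isCompact_Icc.exists_bound_of_continuousOn
          ((hDcont.comp (continuous_const.prodMk continuous_id)).continuousOn)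
      have hev : ∀ᶠ x in nhds x₀, ∀ y ∈ Set.Icc (0:ℝ) 1, ‖D (x, y)‖ < C + 1 := by
        apply isCompact_Icc.eventually_forall_of_forall_eventually
        intro y hy
        have hopen : IsOpen {p : X × ℝ | ‖D p‖ < C + 1} :=
          isOpen_lt (continuous_norm.comp hDcont) continuous_const
        have hmem : (x₀, y) ∈ {p : X × ℝ | ‖D p‖ < C + 1} := by
          show ‖D (x₀, y)‖ < C + 1
          linarith [hC y hy]
        exact hopen.mem_nhds hmem
      refine intervalIntegral.hasFDerivAt_integral_of_dominated_of_fderiv_le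
        (bound := fun _ => C + 1) (F' := fun x s => D (x, s)) hev ?_ ?_ ?_ ?_ ?_ ?_
      · exact Filter.Eventually.of_forall (fun x =>
          (hG.continuous.comp (continuous_const.prodMk continuous_id)).aestronglyMeasurable)
      · exact (hG.continuous.comp (continuous_const.prodMk continuous_id)).intervalIntegrable 0 1
      · exact (hDcont.comp (continuous_const.prodMk continuous_id)).aestronglyMeasurable
      · refine Filter.Eventually.of_forall (fun t ht x hx => ?_)
        have : t ∈ Set.Icc (0:ℝ) 1 := by
          rw [Set.uIoc_of_le zero_le_one] at ht
          exact Set.Ioc_subset_Icc_self ht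
        exact (hx t this).le
      · exact intervalIntegrable_const
      · refine Filter.Eventually.of_forall (fun t _ x _ => ?_)
        exact (hG1 (x, t)).hasFDerivAt.comp x (hasFDerivAt_prodMk_left x t)
    have hfd : fderiv ℝ (fun x => ∫ s in (0:ℝ)..1, G (x, s)) = fun x => ∫ s in (0:ℝ)..1, D (x, s) :=
      funext fun x => (hderiv x).fderiv
    rw [contDiff_succ_iff_fderiv]
    refine ⟨fun x => (hderiv x).differentiableAt, fun h => absurd h (by simp), ?_⟩
    rw [hfd]
    exact ih D hDc

theorem pint_contDiff {X : Type uP} [NormedAddCommGroup X] [NormedSpace ℝ X]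
    {F : Type (max uP uF)} [NormedAddCommGroup F] [NormedSpace ℝ F] [CompleteSpace F]
    (G : X × ℝ → F) (hG : ContDiff ℝ ∞ G) :
    ContDiff ℝ ∞ (fun x => ∫ s in (0:ℝ)..1, G (x, s)) :=
  contDiff_infty.2 fun n => pint_contDiff_nat.{uP, uF} n G (contDiff_infty.1 hG n)

theorem hdd_contDiff_complete {P : Type uP} [NormedAddCommGroup P] [NormedSpace ℝ P]
    {F : Type (max uP uF)} [NormedAddCommGroup F] [NormedSpace ℝ F] [CompleteSpace F]
    (Θ : P × ℝ → F) (hΘ : ContDiff ℝ ∞ Θ) (h0 : ∀ p, Θ (p, 0) = 0) :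
    ContDiff ℝ ∞ (hdd Θ) := by
  have hΘd : Differentiable ℝ Θ := hΘ.differentiable (by simp)
  set G : (P × ℝ) × ℝ → F := fun w => fderiv ℝ Θ (w.1.1, w.2 * w.1.2) ((0:P), (1:ℝ)) with hGdef
  have hG : ContDiff ℝ ∞ G :=
    ((hΘ.fderiv_right (m := ∞) (by simp)).comp
      ((contDiff_fst.comp contDiff_fst).prodMk
        (contDiff_snd.mul (contDiff_snd.comp contDiff_fst)))).clm_apply contDiff_const
  have hGc : Continuous G := hG.continuous
  have hid : hdd Θ = fun q => ∫ s in (0:ℝ)..1, G (q, s) := by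
    funext q
    obtain ⟨p, t⟩ := q
    by_cases ht : t = 0
    · subst ht
      simp [hdd, hGdef]
    · have hderiv : ∀ s ∈ Set.uIcc (0:ℝ) 1,
          HasDerivAt (fun s : ℝ => Θ (p, s * t)) (t • G ((p, t), s)) s := by
        intro s _
        have hι : HasDerivAt (fun s : ℝ => ((p, s * t) : P × ℝ)) ((0:P), t) s := by
          have := (hasDerivAt_const s p).prodMk ((hasDerivAt_id s).mul_const t)
          simpa using this
        have := (hΘd (p, s * t)).hasFDerivAt.comp_hasDerivAt s hι
        rwa [show ((0:P), t) = t • ((0:P), (1:ℝ)) by ext <;> simp, map_smul] at this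
      have hint : IntervalIntegrable (fun s => t • G ((p, t), s)) MeasureTheory.volume 0 1 :=
        (Continuous.intervalIntegrable (by fun_prop) _ _)
      have hftc := intervalIntegral.integral_eq_sub_of_hasDerivAt hderiv hint
      rw [intervalIntegral.integral_smul] at hftc
      simp only [one_mul, zero_mul, h0, sub_zero] at hftc
      show hdd Θ (p, t) = _
      rw [hdd, if_neg ht, ← hftc, smul_smul, inv_mul_cancel₀ ht, one_smul]
  rw [hid]
  exact pint_contDiff.{uP, uF} G hG

lemma norm_comp_of_isom {X V W : Type*} [NormedAddCommGroup X] [NormedSpace ℝ X]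
    [NormedAddCommGroup V] [NormedSpace ℝ V] [NormedAddCommGroup W] [NormedSpace ℝ W]
    (J : V →L[ℝ] W) (hJ : ∀ y, ‖J y‖ = ‖y‖) (L : X →L[ℝ] V) : ‖J.comp L‖ = ‖L‖ :=
  le_antisymm
    (ContinuousLinearMap.opNorm_le_bound _ (norm_nonneg _) fun v => by
      rw [ContinuousLinearMap.comp_apply, hJ]; exact L.le_opNorm v)
    (ContinuousLinearMap.opNorm_le_bound _ (norm_nonneg _) fun v => by
      rw [← hJ]; exact (J.comp L).le_opNorm v)

lemma hasFDerivAt_of_isom {X V W : Type*} [NormedAddCommGroup X] [NormedSpace ℝ X]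
    [NormedAddCommGroup V] [NormedSpace ℝ V] [NormedAddCommGroup W] [NormedSpace ℝ W]
    (J : V →L[ℝ] W) (hJ : ∀ y, ‖J y‖ = ‖y‖) {h : X → V} {L : X →L[ℝ] V} {x : X}
    (H : HasFDerivAt (fun y => J (h y)) (J.comp L) x) : HasFDerivAt h L x := by
  rw [hasFDerivAt_iff_isLittleO_nhds_zero] at H ⊢
  rw [← Asymptotics.isLittleO_norm_left] at H ⊢
  exact H.congr_left (fun v => by simp only [ContinuousLinearMap.comp_apply, ← map_sub, hJ])

lemma oneD_taylor_coeff {V W : Type*} [NormedAddCommGroup V] [NormedSpace ℝ V]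
    [NormedAddCommGroup W] [NormedSpace ℝ W] (A : V →L[ℝ] W) (j : ℕ) :
    ∀ (u : ℝ → W) (g : ℝ → V), ContDiff ℝ ∞ u → ContDiff ℝ ∞ g →
      (∀ t : ℝ, t ^ j • u t = A (g t)) → ((j.factorial : ℕ) : ℝ) • u 0 = A (iteratedDeriv j g 0) := by
  induction j with
  | zero =>
    intro u g _ _ H
    simpa using H 0
  | succ j ih =>
    intro u g hu hg H
    have hud : Differentiable ℝ u := hu.differentiable (by simp)
    have hgd : Differentiable ℝ g := hg.differentiable (by simp)
    have hu' : ContDiff ℝ ∞ (deriv u) := (contDiff_infty_iff_deriv.1 hu).2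
    have hg' : ContDiff ℝ ∞ (deriv g) := (contDiff_infty_iff_deriv.1 hg).2
    set u₁ : ℝ → W := fun t => ((j:ℝ) + 1) • u t + t • deriv u t with hu₁
    have H1 : ∀ t : ℝ, t ^ j • u₁ t = A (deriv g t) := by
      intro t
      have e1 : HasDerivAt (fun t : ℝ => t ^ (j+1) • u t)
          (t ^ (j+1) • deriv u t + (((j+1 : ℕ) : ℝ) * t ^ (j+1-1)) • u t) t :=
        (hasDerivAt_pow (j+1) t).smul (hud t).hasDerivAt
      have e2 : HasDerivAt (fun t : ℝ => A (g t)) (A (deriv g t)) t :=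
        A.hasFDerivAt.comp_hasDerivAt t (hgd t).hasDerivAt
      have hfe : (fun t : ℝ => t ^ (j+1) • u t) = fun t => A (g t) := funext H
      rw [hfe] at e1
      have := e1.unique e2
      rw [← this, hu₁]
      simp only [Nat.add_sub_cancel, smul_add, smul_smul, Nat.cast_add, Nat.cast_one]
      rw [pow_succ]
      module
    have := ih u₁ (deriv g) (by rw [hu₁]; fun_prop) hg' H1
    rw [iteratedDeriv_succ', ← this, hu₁]
    simp only [zero_smul, add_zero, smul_smul, Nat.factorial_succ, Nat.cast_mul]
    congr 1
    push_cast
    ring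

theorem hdd_class_contDiff {P : Type uP} [NormedAddCommGroup P] [NormedSpace ℝ P] (n : ℕ) :
    ∀ {F Fh : Type (max uP uF)} [NormedAddCommGroup F] [NormedSpace ℝ F]
      [NormedAddCommGroup Fh] [NormedSpace ℝ Fh]
      (J : F →L[ℝ] Fh) (_hJ : ∀ y, ‖J y‖ = ‖y‖) (j : ℕ) (h Φ : P × ℝ → F),
      ContDiff ℝ ∞ Φ → (∀ q, q.2 ^ j • h q = Φ q) → ContDiff ℝ ∞ (fun q => J (h q)) →
      ContDiff ℝ n h := by
  induction n with
  | zero =>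
    intro F Fh _ _ _ _ J hJ j h Φ _ _ hJh
    rw [Nat.cast_zero, contDiff_zero]
    exact (AddMonoidHomClass.isometry_of_norm J hJ).isEmbedding.continuous_iff.2 hJh.continuous
  | succ n ih =>
    intro F Fh _ _ _ _ J hJ j h Φ hΦ hhΦ hJh
    have hΦd : Differentiable ℝ Φ := hΦ.differentiable (by simp)
    have hJhd : Differentiable ℝ (fun q => J (h q)) := hJh.differentiable (by simp)
    set Φt : P × ℝ → (P × ℝ →L[ℝ] F) := fun q =>
      q.2 • fderiv ℝ Φ q - (j:ℝ) • (ContinuousLinearMap.snd ℝ P ℝ).smulRight (Φ q) with hΦt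
    set J' : (P × ℝ →L[ℝ] F) →L[ℝ] (P × ℝ →L[ℝ] Fh) :=
      ContinuousLinearMap.compL ℝ (P × ℝ) F Fh J with hJ'
    have hJ'a : ∀ L, J' L = J.comp L := fun L => rfl
    have hJ'n : ∀ L, ‖J' L‖ = ‖L‖ := fun L => by rw [hJ'a]; exact norm_comp_of_isom J hJ L
    have hΦtc : ContDiff ℝ ∞ Φt := by
      rw [hΦt]
      exact (contDiff_snd.smul (hΦ.fderiv_right (m := ∞) (by simp))).sub
        ((contDiff_const.smulRight hΦ).const_smul (j:ℝ))
    -- key identity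
    have KI : ∀ q : P × ℝ, q.2 ^ (j+1) • fderiv ℝ (fun q => J (h q)) q = J' (Φt q) := by
      intro q
      have e1 : HasFDerivAt (fun q : P × ℝ => q.2 ^ j • J (h q))
          (q.2 ^ j • fderiv ℝ (fun q => J (h q)) q
            + (((j:ℝ) * q.2 ^ (j-1)) • ContinuousLinearMap.snd ℝ P ℝ).smulRight (J (h q))) q :=
        ((hasDerivAt_pow j q.2).comp_hasFDerivAt q (hasFDerivAt_snd)).smul
          (hJhd q).hasFDerivAt
      have hfe : (fun q : P × ℝ => q.2 ^ j • J (h q)) = fun q => J (Φ q) := by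
        funext q; rw [← hhΦ, map_smul]
      rw [hfe] at e1
      have e2 : HasFDerivAt (fun q => J (Φ q)) (J.comp (fderiv ℝ Φ q)) q :=
        J.hasFDerivAt.comp q (hΦd q).hasFDerivAt
      have e := e1.unique e2
      apply ContinuousLinearMap.ext
      intro v
      have ev := congrArg (fun L : P × ℝ →L[ℝ] Fh => L v) e
      simp only [ContinuousLinearMap.add_apply, ContinuousLinearMap.coe_smul', Pi.smul_apply,
        ContinuousLinearMap.smulRight_apply, ContinuousLinearMap.coe_snd', smul_eq_mul,
        ContinuousLinearMap.comp_apply] at ev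
      rw [hJ'a, hΦt]
      simp only [ContinuousLinearMap.coe_smul', Pi.smul_apply, ContinuousLinearMap.comp_apply,
        ContinuousLinearMap.sub_apply, ContinuousLinearMap.smulRight_apply,
        ContinuousLinearMap.coe_snd', map_sub, map_smul]
      rw [← hhΦ q, map_smul, ← ev]
      rcases j with _ | j
      · simp
      · simp only [Nat.add_sub_cancel, Nat.cast_add, Nat.cast_one, smul_add, smul_smul]
        rw [pow_succ]
        module
    set h' : P × ℝ → (P × ℝ →L[ℝ] F) := fun q =>
      if q.2 = 0 then (((j+1).factorial : ℕ) : ℝ)⁻¹ • iteratedDeriv (j+1) (fun t => Φt (q.1, t)) 0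
      else (q.2 ^ (j+1))⁻¹ • Φt q with hh'
    have hJh' : ∀ q, J' (h' q) = fderiv ℝ (fun q => J (h q)) q := by
      intro q
      by_cases hq : q.2 = 0
      · have hu : ContDiff ℝ ∞ (fun t : ℝ => fderiv ℝ (fun q => J (h q)) (q.1, t)) :=
          (hJh.fderiv_right (m := ∞) (by simp)).comp (contDiff_const.prodMk contDiff_id)
        have hg : ContDiff ℝ ∞ (fun t : ℝ => Φt (q.1, t)) :=
          hΦtc.comp (contDiff_const.prodMk contDiff_id)
        have key := oneD_taylor_coeff J' (j+1) _ _ hu hg (fun t => KI (q.1, t))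
        rw [hh']
        simp only [if_pos hq, map_smul]
        rw [← key, smul_smul, inv_mul_cancel₀ (by positivity), one_smul]
        rw [show q = (q.1, 0) from Prod.ext rfl hq]
      · rw [hh']
        simp only [if_neg hq, map_smul]
        rw [← KI q, smul_smul, inv_mul_cancel₀ (pow_ne_zero _ hq), one_smul]
    rw [Nat.cast_succ, contDiff_succ_iff_hasFDerivAt]
    refine ⟨h', ?_, ?_⟩
    · refine ih J' hJ'n (j+1) h' Φt hΦtc ?_ ?_
      · intro q
        by_cases hq : q.2 = 0
        · rw [hq, zero_pow (Nat.succ_ne_zero j), zero_smul, hΦt]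
          simp only [hq, zero_smul, zero_sub]
          rcases j with _ | j
          · simp
          · have : Φ q = 0 := by rw [← hhΦ q, hq]; simp
            simp [this]
        · rw [hh']
          simp only [if_neg hq]
          rw [smul_inv_smul₀ (pow_ne_zero _ hq)]
      · have : (fun q => J' (h' q)) = fderiv ℝ (fun q => J (h q)) := funext hJh'
        rw [this]
        exact hJh.fderiv_right (m := ∞) (by simp)
    · intro q
      apply hasFDerivAt_of_isom J hJ
      rw [← hJ'a, hJh' q]
      exact (hJhd q).hasFDerivAt

lemma hdd_comp_clm {P V W : Type*} [NormedAddCommGroup P] [NormedSpace ℝ P]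
    [NormedAddCommGroup V] [NormedSpace ℝ V] [NormedAddCommGroup W] [NormedSpace ℝ W]
    (A : V →L[ℝ] W) (Θ : P × ℝ → V) (hΘ : Differentiable ℝ Θ) :
    hdd (fun q => A (Θ q)) = fun q => A (hdd Θ q) := by
  funext q
  by_cases hq : q.2 = 0
  · simp only [hdd, if_pos hq]
    have hc := A.hasFDerivAt.comp q (hΘ q).hasFDerivAt
    rw [show (fun q => A (Θ q)) = ⇑A ∘ Θ from rfl, hc.fderiv]
    rfl
  · simp only [hdd, if_neg hq, map_smul]

theorem contDiff_hdd {P : Type uP} [NormedAddCommGroup P] [NormedSpace ℝ P]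
    {F : Type uF} [NormedAddCommGroup F] [NormedSpace ℝ F]
    {Θ : P × ℝ → F} (hΘ : ContDiff ℝ ∞ Θ) (h0 : ∀ p, Θ (p, 0) = 0) :
    ContDiff ℝ ∞ (hdd Θ) := by
  have hΘd : Differentiable ℝ Θ := hΘ.differentiable (by simp)
  let eU : ULift.{uP} F ≃L[ℝ] F := ContinuousLinearEquiv.ulift
  let eH : ULift.{uP} (UniformSpace.Completion F) ≃L[ℝ] UniformSpace.Completion F :=
    ContinuousLinearEquiv.ulift
  let J : ULift.{uP} F →L[ℝ] ULift.{uP} (UniformSpace.Completion F) :=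
    (eH.symm : UniformSpace.Completion F →L[ℝ] _).comp
      ((UniformSpace.Completion.toComplL : F →L[ℝ] _).comp (eU : ULift.{uP} F →L[ℝ] F))
  have hJ : ∀ y, ‖J y‖ = ‖y‖ := fun y => by
    show ‖((y.down : F) : UniformSpace.Completion F)‖ = ‖y.down‖
    exact UniformSpace.Completion.norm_coe _
  let A : F →L[ℝ] ULift.{uP} (UniformSpace.Completion F) := J.comp (eU.symm : F →L[ℝ] _)
  have hsm : ContDiff ℝ ∞ (fun q => ULift.up.{uP} (hdd Θ q)) := by
    refine contDiff_infty.2 fun n => hdd_class_contDiff.{uP, uF} n J hJ 1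
      (fun q => ULift.up.{uP} (hdd Θ q)) (fun q => ULift.up.{uP} (Θ q))
      (show ContDiff ℝ ∞ (fun q => ULift.up.{uP} (Θ q)) from
        (eU.symm : F →L[ℝ] ULift.{uP} F).contDiff.comp hΘ) ?_ ?_
    · intro q
      apply ULift.ext
      show q.2 ^ 1 • hdd Θ q = Θ q
      by_cases hq : q.2 = 0
      · rw [hq, pow_one, zero_smul, ← h0 q.1]
        rw [show q = (q.1, 0) from Prod.ext rfl hq]
      · rw [hdd, if_neg hq, pow_one, smul_inv_smul₀ hq]
    · have : (fun q => J (ULift.up.{uP} (hdd Θ q))) = hdd (fun q => A (Θ q)) := by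
        rw [hdd_comp_clm A Θ hΘd]; rfl
      rw [this]
      exact hdd_contDiff_complete.{uP, uF} _ (A.contDiff.comp hΘ) (fun p => by simp [h0])
  exact (eU : ULift.{uP} F →L[ℝ] F).contDiff.comp hsm

end HadamardSmooth

-- the key chain rule computation
lemma fderiv_theta (f : E₁ × E₂ → F₁ × F₂) (hf : ContDiff ℝ (⊤ : ℕ∞) f)
    (x : E₁) (ξ : E₂) :
    fderiv ℝ (fun w : (E₁ × E₂) × ℝ => (f (w.1.1, w.2 • w.1.2)).2) ((x, ξ), 0)
      ((0 : E₁ × E₂), (1:ℝ)) = (fderiv ℝ f (x, 0) (0, ξ)).2 := by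
  have hpt : ((x : E₁), (0:ℝ) • ξ) = ((x, 0) : E₁ × E₂) := by simp
  have hdf : HasFDerivAt f (fderiv ℝ f (x, 0)) ((x : E₁), (0:ℝ) • ξ) := by
    rw [hpt]
    exact ((hf.differentiable (by simp)) (x, 0)).hasFDerivAt
  -- derivative of the inner map γ
  set L₁ : ((E₁ × E₂) × ℝ) →L[ℝ] E₁ :=
    (ContinuousLinearMap.fst ℝ E₁ E₂).comp (ContinuousLinearMap.fst ℝ (E₁ × E₂) ℝ) with hL₁
  set Lt : ((E₁ × E₂) × ℝ) →L[ℝ] ℝ := ContinuousLinearMap.snd ℝ (E₁ × E₂) ℝ with hLt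
  set L₂ : ((E₁ × E₂) × ℝ) →L[ℝ] E₂ :=
    (ContinuousLinearMap.snd ℝ E₁ E₂).comp (ContinuousLinearMap.fst ℝ (E₁ × E₂) ℝ) with hL₂
  have hc : HasFDerivAt (fun w : (E₁ × E₂) × ℝ => w.2) Lt ((x, ξ), 0) := Lt.hasFDerivAt
  have hv : HasFDerivAt (fun w : (E₁ × E₂) × ℝ => w.1.2) L₂ ((x, ξ), 0) := L₂.hasFDerivAt
  have hsm : HasFDerivAt (fun w : (E₁ × E₂) × ℝ => w.2 • w.1.2)
      (Lt.smulRight ξ) ((x, ξ), 0) := by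
    have := hc.fun_smul hv
    simpa using this
  have h1 : HasFDerivAt (fun w : (E₁ × E₂) × ℝ => w.1.1) L₁ ((x, ξ), 0) := L₁.hasFDerivAt
  have hγ : HasFDerivAt (fun w : (E₁ × E₂) × ℝ => ((w.1.1, w.2 • w.1.2) : E₁ × E₂))
      (L₁.prod (Lt.smulRight ξ)) ((x, ξ), 0) := h1.prodMk hsm
  have hcomp : HasFDerivAt (fun w : (E₁ × E₂) × ℝ => (f (w.1.1, w.2 • w.1.2)).2)
      ((ContinuousLinearMap.snd ℝ F₁ F₂).comp
        ((fderiv ℝ f (x, 0)).comp (L₁.prod (Lt.smulRight ξ)))) ((x, ξ), 0) := by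
    exact (ContinuousLinearMap.snd ℝ F₁ F₂).hasFDerivAt.comp ((x, ξ), 0) (hdf.comp ((x, ξ), 0) hγ)
  rw [hcomp.fderiv]
  simp [hL₁, hLt]

/-- Functoriality of the deformation to the normal cone: if `f` and `g` are
smooth maps sending the submanifold (slice) into the submanifold, then `D(f)`
is smooth, `D(g ∘ f) = D(g) ∘ D(f)`, and `D(id) = id`. -/
theorem dncMap_functorial
    (f : E₁ × E₂ → F₁ × F₂) (g : F₁ × F₂ → G₁ × G₂)
    (hf : ContDiff ℝ (⊤ : ℕ∞) f) (hg : ContDiff ℝ (⊤ : ℕ∞) g)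
    (hf0 : ∀ x : E₁, (f (x, 0)).2 = 0)
    (hg0 : ∀ y : F₁, (g (y, 0)).2 = 0) :
    ContDiff ℝ (⊤ : ℕ∞) (dncMap f) ∧
    dncMap (g ∘ f) = dncMap g ∘ dncMap f ∧
    dncMap (id : E₁ × E₂ → E₁ × E₂) = id := by
  have hdf : Differentiable ℝ f := hf.differentiable (by simp)
  have hdg : Differentiable ℝ g := hg.differentiable (by simp)
  refine ⟨?_, ?_, ?_⟩
  · -- smoothness
    set Θ : (E₁ × E₂) × ℝ → F₂ := fun w => (f (w.1.1, w.2 • w.1.2)).2 with hΘdef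
    have hΘ : ContDiff ℝ (⊤ : ℕ∞) Θ := by
      apply ContDiff.snd
      apply hf.comp
      exact ContDiff.prodMk (contDiff_fst.comp contDiff_fst)
        (contDiff_snd.fun_smul (contDiff_snd.comp contDiff_fst))
    have hΘ0 : ∀ p : E₁ × E₂, Θ (p, 0) = 0 := by
      intro p
      simp only [hΘdef]
      simpa using hf0 p.1
    have hrw : dncMap f = fun z : E₁ × E₂ × ℝ =>
        ((f (z.1, z.2.2 • z.2.1)).1, hdd Θ ((z.1, z.2.1), z.2.2), z.2.2) := by
      funext z
      by_cases h : z.2.2 = 0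
      · have h2 : hdd Θ ((z.1, z.2.1), z.2.2) = (fderiv ℝ f (z.1, 0) (0, z.2.1)).2 := by
          rw [h, hdd, if_pos rfl]
          exact fderiv_theta f hf z.1 z.2.1
        rw [dncMap, if_pos h, h2, h]
        simp
      · rw [dncMap, if_neg h, hdd, if_neg h]
    rw [hrw]
    refine ContDiff.prodMk ?_ (ContDiff.prodMk ?_ ?_)
    · exact contDiff_fst.comp (hf.comp (contDiff_fst.prodMk
        ((contDiff_snd.comp contDiff_snd).smul (contDiff_fst.comp contDiff_snd))))
    · exact (contDiff_hdd hΘ hΘ0).comp ((contDiff_fst.prodMk (contDiff_fst.comp contDiff_snd)).prodMk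
        (contDiff_snd.comp contDiff_snd))
    · exact contDiff_snd.comp contDiff_snd
  · -- functoriality
    have hker : ∀ (y : F₁) (v : F₁ × F₂), (fderiv ℝ g (y, 0) (v.1, 0)).2 = 0 := by
      intro y v
      have hconst : (fun y : F₁ => (g (y, 0)).2) = fun _ => (0 : G₂) := funext hg0
      have hu : HasFDerivAt (fun y : F₁ => (g (y, 0)).2)
          ((ContinuousLinearMap.snd ℝ G₁ G₂).comp
            ((fderiv ℝ g (y, 0)).comp (ContinuousLinearMap.inl ℝ F₁ F₂))) y := by
        have hg' : HasFDerivAt g (fderiv ℝ g (y, 0)) ((ContinuousLinearMap.inl ℝ F₁ F₂) y) :=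
          (hdg ((y, 0) : F₁ × F₂)).hasFDerivAt
        exact (ContinuousLinearMap.snd ℝ G₁ G₂).hasFDerivAt.comp y
          (hg'.comp y (ContinuousLinearMap.inl ℝ F₁ F₂).hasFDerivAt)
      have hu0 : HasFDerivAt (fun y : F₁ => (g (y, 0)).2) (0 : F₁ →L[ℝ] G₂) y := by
        rw [hconst]
        exact hasFDerivAt_const 0 y
      have := hu.unique hu0
      have happ := congrArg (fun (L : F₁ →L[ℝ] G₂) => L v.1) this
      simpa using happ
    have hsnd : ∀ (y : F₁) (v : F₁ × F₂), (fderiv ℝ g (y, 0) v).2 = (fderiv ℝ g (y, 0) (0, v.2)).2 := by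
      intro y v
      have hv : v = (v.1, (0:F₂)) + (0, v.2) := by ext <;> simp
      rw [hv, map_add]
      rw [Prod.snd_add]
      rw [hker y v]
      simp
    funext z
    by_cases h : z.2.2 = 0
    · have hfz : f (z.1, 0) = ((f (z.1, 0)).1, (0:F₂)) := by
        ext
        · rfl
        · exact hf0 z.1
      have hinner : dncMap f z = ((f (z.1, 0)).1, (fderiv ℝ f (z.1, 0) (0, z.2.1)).2, 0) := by
        rw [dncMap, if_pos h]
      have houter : (dncMap g ∘ dncMap f) z
          = ((g ((f (z.1, 0)).1, 0)).1,
             (fderiv ℝ g ((f (z.1, 0)).1, 0) (0, (fderiv ℝ f (z.1, 0) (0, z.2.1)).2)).2, 0) := by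
        rw [Function.comp_apply, hinner, dncMap, if_pos rfl]
      rw [houter, dncMap, if_pos h]
      have hchain : fderiv ℝ (g ∘ f) (z.1, 0)
          = (fderiv ℝ g (f (z.1, 0))).comp (fderiv ℝ f (z.1, 0)) :=
        fderiv_comp (z.1, 0) (hdg _) (hdf _)
      refine Prod.ext ?_ (Prod.ext ?_ rfl)
      · show ((g ∘ f) (z.1, 0)).1 = (g ((f (z.1, 0)).1, 0)).1
        rw [Function.comp_apply, hfz]
      · show (fderiv ℝ (g ∘ f) (z.1, 0) (0, z.2.1)).2
          = (fderiv ℝ g ((f (z.1, 0)).1, 0) (0, (fderiv ℝ f (z.1, 0) (0, z.2.1)).2)).2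
        rw [hchain]
        rw [ContinuousLinearMap.comp_apply]
        rw [show f (z.1, 0) = (((f (z.1, 0)).1, (0:F₂)) : F₁ × F₂) from hfz]
        exact hsnd (f (z.1, 0)).1 (fderiv ℝ f (z.1, 0) (0, z.2.1))
    · have hinner : dncMap f z
          = ((f (z.1, z.2.2 • z.2.1)).1, z.2.2⁻¹ • (f (z.1, z.2.2 • z.2.1)).2, z.2.2) := by
        rw [dncMap, if_neg h]
      have hre : (((f (z.1, z.2.2 • z.2.1)).1 : F₁),
          z.2.2 • z.2.2⁻¹ • (f (z.1, z.2.2 • z.2.1)).2) = f (z.1, z.2.2 • z.2.1) := by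
        ext
        · rfl
        · simp [smul_smul, mul_inv_cancel₀ h]
      have houter : (dncMap g ∘ dncMap f) z
          = ((g (f (z.1, z.2.2 • z.2.1))).1, z.2.2⁻¹ • (g (f (z.1, z.2.2 • z.2.1))).2, z.2.2) := by
        rw [Function.comp_apply, hinner, dncMap]
        simp only [if_neg h]
        rw [hre]
      rw [houter, dncMap, if_neg h]
      rfl
  · -- identity
    funext z
    by_cases h : z.2.2 = 0
    · rw [dncMap, if_pos h]
      have : fderiv ℝ (id : E₁ × E₂ → E₁ × E₂) (z.1, 0) = ContinuousLinearMap.id ℝ (E₁ × E₂) :=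
        fderiv_id
      rw [this]
      simp only [ContinuousLinearMap.coe_id', id_eq]
      exact Prod.ext rfl (Prod.ext rfl h.symm)
    · rw [dncMap, if_neg h]
      simp only [id_eq]
      exact Prod.ext rfl (Prod.ext (by simp [inv_smul_smul₀ h]) rfl)
end
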